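/- Let Γ be a group. Let P(T) ∈ 𝒪_E[[T]] be a power series with zero constant term whose reduction modulo 𝔪_E equals T^q and whose coefficient of T is nonzero. Suppose given a family (F_g(T))_{g∈Γ} of power series in 𝒪_E[[T]] with zero constant term such that: (i) F_h(F_g(T)) = F_{gh}(T) for all g,h ∈ Γ; (ii) F_g(P(T)) = P(F_g(T)) for all g ∈ Γ; and (iii) the reduction of F_g modulo 𝔪_E equals T if and only if g = 1. Then the map sending g to the coefficient of T in F_g is an injective group homomorphism Γ → 𝒪_E^×; in particular Γ is abelian. -/

import Mathlib

open PowerSeries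

/-- Formal substitution `f(g)` of a power series `g` with zero constant term into a power
series `f`. -/
noncomputable def PowerSeries.comp {R : Type*} [CommRing R] (f g : PowerSeries R) :
    PowerSeries R :=
  PowerSeries.mk fun n => ∑ k ∈ Finset.range (n + 1), coeff (R := R) k f * coeff (R := R) n (g ^ k)

/-- The ring of integers of an ultrametric normed field: elements of norm at most `1`. -/
noncomputable def ringOfIntegers (E : Type*) [NormedField E] [IsUltrametricDist E] :
    Subring E where
  carrier := {x | ‖x‖ ≤ 1}
  mul_mem' := fun {a b} ha hb => by
    simpa [norm_mul] using mul_le_one₀ ha (norm_nonneg _) hb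
  one_mem' := by simp
  add_mem' := fun {a b} ha hb =>
    le_trans (IsUltrametricDist.norm_add_le_max a b) (max_le ha hb)
  zero_mem' := by simp
  neg_mem' := fun {a} ha => by simpa using ha

/-- The maximal ideal of the ring of integers: elements of norm less than `1`. -/
noncomputable def maxIdeal (E : Type*) [NormedField E] [IsUltrametricDist E] :
    Ideal (ringOfIntegers E) where
  carrier := {x | ‖(x : E)‖ < 1}
  add_mem' := fun {a b} ha hb =>
    lt_of_le_of_lt (IsUltrametricDist.norm_add_le_max (a : E) (b : E)) (max_lt ha hb)
  zero_mem' := by simp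
  smul_mem' := fun c x hx => by
    have hc : ‖(c : E)‖ ≤ 1 := c.2
    calc ‖((c • x : ringOfIntegers E) : E)‖ = ‖(c : E)‖ * ‖(x : E)‖ := by
          simp [norm_mul]
      _ ≤ 1 * ‖(x : E)‖ := by gcongr
      _ < 1 := by simpa using hx

/-!
The derivative at `0` is multiplicative under composition, so `g ↦ (F g)'(0)` is a homomorphism,
and its values are units of `𝒪_E` because `F g⁻¹` inverts `F g`. Injectivity reduces to the
kernel: if `(F g)'(0) = 1`, then `F g = X + d X ^ N + ⋯` with `N ≥ 2` commutes with `P`, and the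
coefficient of `X ^ N` in `F g ∘ P = P ∘ F g` reads `d π ^ N = π d`, where `π = P'(0)`. Since
`0 < ‖π‖ < 1` (the reduction of `P` is `X ^ q` with `q ≠ 1`), `π ^ N ≠ π`, so `d = 0`; hence
`F g = X`, its reduction is `X` and `g = 1`. A group with an injective homomorphism to a
commutative monoid is abelian.
-/

open Finset

namespace PowerSeries

variable {R : Type*} [CommRing R]

lemma coeff_comp (f g : PowerSeries R) (n : ℕ) :
    coeff n (f.comp g) = ∑ k ∈ range (n + 1), coeff k f * coeff n (g ^ k) :=
  coeff_mk _ _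

lemma coeff_one_comp (f g : PowerSeries R) : coeff 1 (f.comp g) = coeff 1 f * coeff 1 g := by
  simp [coeff_comp, sum_range_succ]

lemma comp_X (f : PowerSeries R) : f.comp X = f := by
  ext n
  simp [coeff_comp, coeff_X_pow]

lemma X_comp {g : PowerSeries R} (hg : constantCoeff g = 0) : (X : PowerSeries R).comp g = g := by
  ext n
  rcases n with _ | n
  · simp [coeff_comp, hg]
  · simp [coeff_comp, coeff_X]

lemma sub_comp (f f' g : PowerSeries R) : (f - f').comp g = f.comp g - f'.comp g := by
  ext n
  simp [coeff_comp, sub_mul]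

lemma coeff_pow_self {g : PowerSeries R} (hg : constantCoeff g = 0) (n : ℕ) :
    coeff n (g ^ n) = coeff 1 g ^ n := by
  obtain ⟨u, rfl⟩ := X_dvd_iff.mpr hg
  simp [mul_pow, coeff_X_pow_mul']

lemma coeff_comp_of_X_pow_dvd {f g : PowerSeries R} {N : ℕ} (hf : X ^ N ∣ f)
    (hg : constantCoeff g = 0) : coeff N (f.comp g) = coeff N f * coeff 1 g ^ N := by
  rw [coeff_comp, sum_range_succ, coeff_pow_self hg, add_eq_right]
  refine sum_eq_zero fun k hk => ?_
  rw [X_pow_dvd_iff.mp hf k (mem_range.mp hk), zero_mul]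

lemma X_pow_succ_dvd_pow_sub_X_pow {G : PowerSeries R} {N k : ℕ} (hN : 1 ≤ N) (hGX : X ^ N ∣ G - X)
    (hk : 2 ≤ k) : X ^ (N + 1) ∣ G ^ k - X ^ k := by
  obtain ⟨D, hD⟩ := hGX
  obtain ⟨U, rfl⟩ : X ∣ G := by
    have hX : X ∣ G - X := (dvd_pow_self X (by omega)).trans ⟨D, hD⟩
    simpa using hX.add (dvd_refl X)
  have hfactor : (X * U) ^ k - X ^ k = X ^ (k - 1) * (X * U - X) * ∑ i ∈ range k, U ^ i := by
    obtain ⟨j, rfl⟩ := Nat.exists_eq_add_of_le' hk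
    rw [show j + 2 - 1 = j + 1 by omega]
    linear_combination (-X ^ (j + 2) : PowerSeries R) * geom_sum_mul U (j + 2)
  rw [hfactor, hD, ← mul_assoc, ← pow_add, mul_assoc]
  exact (pow_dvd_pow X (by omega)).mul_right _

lemma coeff_comp_of_X_pow_dvd_sub_X (f : PowerSeries R) {G : PowerSeries R} {N : ℕ} (hN : 1 ≤ N)
    (hGX : X ^ N ∣ G - X) : coeff N (f.comp G) = coeff N f + coeff 1 f * coeff N (G - X) := by
  have hsplit : coeff N (f.comp G) =
      coeff N (f.comp X) + ∑ k ∈ range (N + 1), coeff k f * coeff N (G ^ k - X ^ k) := by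
    simp only [coeff_comp, map_sub, mul_sub, sum_sub_distrib, add_sub_cancel]
  rw [hsplit, comp_X, sum_eq_single 1, pow_one, pow_one]
  · intro k _ hk1
    rcases Nat.lt_or_ge k 2 with hk | hk
    · obtain rfl : k = 0 := by omega
      simp
    · rw [X_pow_dvd_iff.mp (X_pow_succ_dvd_pow_sub_X_pow hN hGX hk) N N.lt_succ_self, mul_zero]
  · intro h
    exact absurd (mem_range.mpr (by omega)) h

variable [NoZeroDivisors R]

lemma X_pow_succ_dvd_sub_X_of_comp_comm {P G : PowerSeries R} {N : ℕ}
    (hP : constantCoeff P = 0) (hPN : coeff 1 P ^ N ≠ coeff 1 P) (hN : 1 ≤ N)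
    (hGX : X ^ N ∣ G - X) (hcomm : G.comp P = P.comp G) : X ^ (N + 1) ∣ G - X := by
  set d := coeff N (G - X)
  have hGP : coeff N (G.comp P) = coeff N P + d * coeff 1 P ^ N := by
    rw [← coeff_comp_of_X_pow_dvd hGX hP, sub_comp, X_comp hP, map_sub]
    ring
  have hPG : coeff N (P.comp G) = coeff N P + coeff 1 P * d :=
    coeff_comp_of_X_pow_dvd_sub_X P hN hGX
  have hd : d = 0 := by
    have : d * (coeff 1 P ^ N - coeff 1 P) = 0 := by
      linear_combination hGP.symm.trans ((congrArg (coeff N) hcomm).trans hPG)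
    exact (mul_eq_zero.mp this).resolve_right (sub_ne_zero.mpr hPN)
  refine X_pow_dvd_iff.mpr fun m hm => ?_
  rcases Nat.lt_succ_iff_lt_or_eq.mp hm with hm | rfl
  · exact X_pow_dvd_iff.mp hGX m hm
  · exact hd

lemma eq_X_of_comp_comm {P G : PowerSeries R} (hP : constantCoeff P = 0)
    (hπ : ∀ m, 2 ≤ m → coeff 1 P ^ m ≠ coeff 1 P) (hG0 : constantCoeff G = 0)
    (hG1 : coeff 1 G = 1) (hcomm : G.comp P = P.comp G) : G = X := by
  have hdvd : ∀ n, X ^ (n + 2) ∣ G - X := by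
    intro n
    induction n with
    | zero =>
      refine X_pow_dvd_iff.mpr fun m hm => ?_
      interval_cases m <;> simp [hG0, hG1]
    | succ n ih => exact X_pow_succ_dvd_sub_X_of_comp_comm hP (hπ _ (by omega)) (by omega) ih hcomm
  refine sub_eq_zero.mp (ext fun n => ?_)
  simpa using X_pow_dvd_iff.mp (hdvd n) n (by omega)

end PowerSeries

lemma norm_eq_one_of_mul_eq_one {K : Type*} [SeminormedRing K] [NormOneClass K] {a b : K}
    (ha : ‖a‖ ≤ 1) (hb : ‖b‖ ≤ 1) (hab : a * b = 1) : ‖a‖ = 1 :=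
  le_antisymm ha <| calc
    1 = ‖a * b‖ := by rw [hab, norm_one]
    _ ≤ ‖a‖ * ‖b‖ := norm_mul_le a b
    _ ≤ ‖a‖ := mul_le_of_le_one_right (norm_nonneg a) hb

lemma pow_ne_self_of_norm_lt_one {K : Type*} [NormedDivisionRing K] {x : K} (hx0 : x ≠ 0)
    (hx1 : ‖x‖ < 1) {m : ℕ} (hm : 2 ≤ m) : x ^ m ≠ x := by
  intro h
  have hlt : ‖x‖ ^ m < ‖x‖ ^ 1 := pow_lt_pow_right_of_lt_one₀ (norm_pos_iff.mpr hx0) hx1 hm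
  rw [← norm_pow, h, pow_one] at hlt
  exact hlt.false

lemma card_quotient_maxIdeal_ne_one (E : Type*) [NormedField E] [IsUltrametricDist E] :
    Nat.card (ringOfIntegers E ⧸ maxIdeal E) ≠ 1 := by
  have : Nontrivial (ringOfIntegers E ⧸ maxIdeal E) := by
    refine Ideal.Quotient.nontrivial_iff.mpr fun htop => ?_
    have h1 : (1 : ringOfIntegers E) ∈ maxIdeal E := htop ▸ Submodule.mem_top
    exact (show ‖((1 : ringOfIntegers E) : E)‖ < 1 from h1).ne (by simp)
  exact fun h => not_subsingleton _ (Nat.card_eq_one_iff_unique.mp h).1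

noncomputable def coeffOneHom {Γ K : Type*} [Monoid Γ] [CommRing K] (F : Γ → PowerSeries K)
    (hFmul : ∀ g h : Γ, (F h).comp (F g) = F (g * h)) (hF1 : coeff 1 (F 1) = 1) : Γ →* K where
  toFun g := coeff 1 (F g)
  map_one' := hF1
  map_mul' g h := by rw [← hFmul, PowerSeries.coeff_one_comp, mul_comm]

lemma coeff_one_apply_one_eq_one {Γ K : Type*} [Monoid Γ] [CommRing K] [NoZeroDivisors K]
    {F : Γ → PowerSeries K} (hFmul : ∀ g h : Γ, (F h).comp (F g) = F (g * h))
    (h : coeff 1 (F 1) ≠ 0) : coeff 1 (F 1) = 1 := by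
  refine mul_left_cancel₀ h ?_
  rw [mul_one, ← PowerSeries.coeff_one_comp, hFmul, mul_one]

theorem coeff_one_injective_hom_of_lift_general
    (E : Type*) [NormedField E] [IsUltrametricDist E]
    (q : ℕ) (hq : q = Nat.card ((ringOfIntegers E) ⧸ (maxIdeal E)))
    (Γ : Type*) [Group Γ]
    (P : PowerSeries E)
    (hP0 : constantCoeff (R := E) P = 0)
    (hPred : ∀ n, ‖coeff (R := E) n (P - X ^ q)‖ < 1)
    (hP1 : coeff (R := E) 1 P ≠ 0)
    (F : Γ → PowerSeries E)
    (hFint : ∀ g, ∀ n, ‖coeff (R := E) n (F g)‖ ≤ 1)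
    (hF0 : ∀ g, constantCoeff (R := E) (F g) = 0)
    (hFmul : ∀ g h : Γ, (F h).comp (F g) = F (g * h))
    (hFP : ∀ g, (F g).comp P = P.comp (F g))
    (hFone : ∀ g, (∀ n, ‖coeff (R := E) n (F g - X)‖ < 1) ↔ g = 1) :
    (∀ g, ‖coeff (R := E) 1 (F g)‖ = 1) ∧
      (∀ g h : Γ, coeff (R := E) 1 (F (g * h)) = coeff (R := E) 1 (F g) * coeff (R := E) 1 (F h)) ∧
      Function.Injective (fun g => coeff (R := E) 1 (F g)) ∧
      ∀ g h : Γ, g * h = h * g := by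
  have hπ : ‖coeff 1 P‖ < 1 := by
    simpa [coeff_X_pow, Ne.symm (hq ▸ card_quotient_maxIdeal_ne_one E)] using hPred 1
  have hF1 : coeff 1 (F 1) = 1 := coeff_one_apply_one_eq_one hFmul fun h0 => by
    simpa [h0] using (hFone 1).mpr rfl 1
  set χ := coeffOneHom F hFmul hF1
  have hker : ∀ g, χ g = 1 → g = 1 := fun g hg => (hFone g).mp fun n => by
    rw [PowerSeries.eq_X_of_comp_comm hP0 (fun m => pow_ne_self_of_norm_lt_one hP1 hπ)
      (hF0 g) hg (hFP g)]
    simp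
  have hinj : Function.Injective χ := (injective_iff_map_eq_one χ).mpr hker
  refine ⟨fun g => norm_eq_one_of_mul_eq_one (hFint g 1) (hFint g⁻¹ 1) ?_, map_mul χ, hinj,
    fun g h => hinj (by rw [map_mul, map_mul, mul_comm])⟩
  change χ g * χ g⁻¹ = 1
  rw [← map_mul, mul_inv_cancel, map_one]

/-- Let `Γ` be a group, `P ∈ 𝒪_E[[T]]` with zero constant term, reduction
`T^q` modulo `𝔪_E`, and nonzero coefficient of `T`. Given series `F_g ∈ 𝒪_E[[T]]` with zero
constant term such that `F_h(F_g(T)) = F_{gh}(T)`, `F_g(P(T)) = P(F_g(T))`, and the reduction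
of `F_g` mod `𝔪_E` is `T` iff `g = 1`, the map `g ↦ (coefficient of T in F_g)` is an
injective group homomorphism `Γ → 𝒪_E^×`; in particular `Γ` is abelian. -/
theorem coeff_one_injective_hom_of_lift
    {p : ℕ} [Fact p.Prime] (E : Type*) [NormedField E] [IsUltrametricDist E]
    [NormedAlgebra ℚ_[p] E] [FiniteDimensional ℚ_[p] E]
    (q : ℕ) (hq : q = Nat.card ((ringOfIntegers E) ⧸ (maxIdeal E)))
    (Γ : Type*) [Group Γ]
    (P : PowerSeries E) (hPint : ∀ n, ‖coeff (R := E) n P‖ ≤ 1)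
    (hP0 : constantCoeff (R := E) P = 0)
    (hPred : ∀ n, ‖coeff (R := E) n (P - X ^ q)‖ < 1)
    (hP1 : coeff (R := E) 1 P ≠ 0)
    (F : Γ → PowerSeries E)
    (hFint : ∀ g, ∀ n, ‖coeff (R := E) n (F g)‖ ≤ 1)
    (hF0 : ∀ g, constantCoeff (R := E) (F g) = 0)
    (hFmul : ∀ g h : Γ, (F h).comp (F g) = F (g * h))
    (hFP : ∀ g, (F g).comp P = P.comp (F g))
    (hFone : ∀ g, (∀ n, ‖coeff (R := E) n (F g - X)‖ < 1) ↔ g = 1) :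
    (∀ g, ‖coeff (R := E) 1 (F g)‖ = 1) ∧
      (∀ g h : Γ, coeff (R := E) 1 (F (g * h)) = coeff (R := E) 1 (F g) * coeff (R := E) 1 (F h)) ∧
      Function.Injective (fun g => coeff (R := E) 1 (F g)) ∧
      ∀ g h : Γ, g * h = h * g :=
  coeff_one_injective_hom_of_lift_general E q hq Γ P hP0 hPred hP1 F hFint hF0 hFmul hFP hFone
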